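/- Let φ_1 be a strongly nonrepetitive colouring of a graph G and let φ_2 be an ℓ-colouring of a graph H such that every φ_2-repetitive lazy walk in H is boring. Then the product colouring φ of G ⊠ H defined by φ(u,v) = (φ_1(u), φ_2(v)) is a strongly nonrepetitive colouring of G ⊠ H. -/

import Mathlib

/-- A *lazy walk* in `G` is a sequence of vertices in which any two consecutive vertices
are equal or adjacent. -/
def SimpleGraph.IsLazyWalk {V : Type*} (G : SimpleGraph V) (l : List V) : Prop :=
  l.Chain' fun a b => a = b ∨ G.Adj a b

/-- A colouring `φ` of `G` is *strongly nonrepetitive* if every `φ`-repetitive lazy walk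
`v₀, …, v₂ₖ₋₁` (with `k ≥ 1`, repetitive meaning the first half of the colour sequence
equals the second half) has `vᵢ = vᵢ₊ₖ` for some `i < k`. -/
def SimpleGraph.IsStronglyNonrepetitiveColouring {V α : Type*} (G : SimpleGraph V)
    (φ : V → α) : Prop :=
  ∀ (l : List V) (k : ℕ), G.IsLazyWalk l → 0 < k → l.length = 2 * k →
    (l.map φ).take k = (l.map φ).drop k → ∃ i < k, l[i]? = l[i + k]?

/-- `π*(G)`: the least `n` such that `G` has a strongly nonrepetitive colouring with
`n` colours. -/
noncomputable def SimpleGraph.strongNonrepChromNum {V : Type*} (G : SimpleGraph V) : ℕ :=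
  sInf {n : ℕ | ∃ φ : V → Fin n, G.IsStronglyNonrepetitiveColouring φ}

/-- `φ` is a colouring of `G` all of whose `φ`-repetitive lazy walks `v₀, …, v₂ₖ₋₁` are
*boring*, i.e. satisfy `vᵢ = vᵢ₊ₖ` for all `i < k`. -/
def SimpleGraph.LazyWalksBoring {V α : Type*} (G : SimpleGraph V) (φ : V → α) : Prop :=
  ∀ (l : List V) (k : ℕ), G.IsLazyWalk l → l.length = 2 * k →
    (l.map φ).take k = (l.map φ).drop k → ∀ i < k, l[i]? = l[i + k]?

/-- The strong product `G ⊠ H`: distinct vertices `(v, x)` and `(w, y)` are adjacent iff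
(`v = w` or `vw ∈ E(G)`) and (`x = y` or `xy ∈ E(H)`). -/
def SimpleGraph.strongProd {α β : Type*} (G : SimpleGraph α) (H : SimpleGraph β) :
    SimpleGraph (α × β) where
  Adj x y := x ≠ y ∧ (x.1 = y.1 ∨ G.Adj x.1 y.1) ∧ (x.2 = y.2 ∨ H.Adj x.2 y.2)
  symm := by
    constructor
    rintro x y ⟨h1, h2, h3⟩
    refine ⟨h1.symm, ?_, ?_⟩
    · rcases h2 with h | h
      exacts [Or.inl h.symm, Or.inr h.symm]
    · rcases h3 with h | h
      exacts [Or.inl h.symm, Or.inr h.symm]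
  loopless := by constructor; rintro x ⟨h1, -, -⟩; exact h1 rfl

namespace SimpleGraph

variable {V W : Type*} {G : SimpleGraph V} {H : SimpleGraph W}

theorem IsLazyWalk.map {l : List V} (hl : G.IsLazyWalk l) {f : V → W}
    (hf : ∀ a b, G.Adj a b → f a = f b ∨ H.Adj (f a) (f b)) :
    H.IsLazyWalk (l.map f) := by
  rw [IsLazyWalk, List.Chain', List.isChain_map]
  exact hl.imp fun a b hab => hab.elim (fun h => Or.inl (congrArg f h)) (hf a b)

theorem strongProd_adj_fst {p q : V × W} (h : (G.strongProd H).Adj p q) :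
    p.1 = q.1 ∨ G.Adj p.1 q.1 :=
  h.2.1

theorem strongProd_adj_snd {p q : V × W} (h : (G.strongProd H).Adj p q) :
    p.2 = q.2 ∨ H.Adj p.2 q.2 :=
  h.2.2

end SimpleGraph

theorem List.map_take_eq_map_drop {α β : Type*} {x : List α} {k : ℕ} (h : x.take k = x.drop k)
    (g : α → β) : (x.map g).take k = (x.map g).drop k := by
  rw [← List.map_take, ← List.map_drop, h]

theorem Option.eq_of_map_fst_eq_of_map_snd {α β : Type*} {a b : Option (α × β)}
    (h₁ : a.map Prod.fst = b.map Prod.fst) (h₂ : a.map Prod.snd = b.map Prod.snd) : a = b := by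
  cases a <;> cases b <;> simp_all [Prod.ext_iff]

/-- Let `φ₁` be a strongly nonrepetitive colouring of a graph `G` and let `φ₂` be an
`ℓ`-colouring of a graph `H` such that every `φ₂`-repetitive lazy walk in `H` is boring.
Then the product colouring `(u, v) ↦ (φ₁ u, φ₂ v)` is a strongly nonrepetitive colouring
of `G ⊠ H`. -/
theorem isStronglyNonrepetitiveColouring_prod (V W α : Type) (G : SimpleGraph V)
    (H : SimpleGraph W) (φ₁ : V → α) (ℓ : ℕ) (φ₂ : W → Fin ℓ)
    (h₁ : G.IsStronglyNonrepetitiveColouring φ₁) (h₂ : H.LazyWalksBoring φ₂) :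
    (G.strongProd H).IsStronglyNonrepetitiveColouring (fun p => (φ₁ p.1, φ₂ p.2)) := by
  intro l k hwalk hk hlen hcol
  obtain ⟨i, hik, hi₁⟩ := h₁ (l.map Prod.fst) k
    (hwalk.map fun _ _ => SimpleGraph.strongProd_adj_fst) hk (by rw [List.length_map, hlen])
    (by simpa only [List.map_map, Function.comp_def] using
      List.map_take_eq_map_drop hcol Prod.fst)
  have hi₂ := h₂ (l.map Prod.snd) k
    (hwalk.map fun _ _ => SimpleGraph.strongProd_adj_snd) (by rw [List.length_map, hlen])
    (by simpa only [List.map_map, Function.comp_def] using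
      List.map_take_eq_map_drop hcol Prod.snd) i hik
  rw [List.getElem?_map, List.getElem?_map] at hi₁ hi₂
  exact ⟨i, hik, Option.eq_of_map_fst_eq_of_map_snd hi₁ hi₂⟩
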